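/- For every integer n, the canonical-form integer game n plus its conjugate is equivalent to 0 modulo the universe of dead-ending games: n + conj(n) ≡ 0 (mod E). -/

import Mathlib

namespace SetTheory

universe u

/-- Pre-games, as defined in the older Mathlib (`SetTheory.PGame`, removed since). -/
inductive PGame : Type (u + 1)
  | mk : ∀ α β : Type u, (α → PGame) → (β → PGame) → PGame

namespace PGame

def LeftMoves : PGame → Type u
  | mk l _ _ _ => l

def RightMoves : PGame → Type u
  | mk _ r _ _ => r

def moveLeft : ∀ g : PGame, LeftMoves g → PGame
  | mk _l _ L _ => L

def moveRight : ∀ g : PGame, RightMoves g → PGame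
  | mk _ _r _ R => R

inductive IsOption : PGame → PGame → Prop
  | moveLeft {x : PGame} (i : x.LeftMoves) : IsOption (x.moveLeft i) x
  | moveRight {x : PGame} (i : x.RightMoves) : IsOption (x.moveRight i) x

instance : Zero PGame :=
  ⟨⟨PEmpty, PEmpty, PEmpty.elim, PEmpty.elim⟩⟩

def neg : PGame → PGame
  | ⟨l, r, L, R⟩ => ⟨r, l, fun i => neg (R i), fun i => neg (L i)⟩

instance : Neg PGame :=
  ⟨neg⟩

noncomputable instance : Add PGame.{u} :=
  ⟨fun x y => by
    induction x generalizing y with | mk xl xr _ _ IHxl IHxr => _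
    induction y with | mk yl yr yL yR IHyl IHyr => _
    have y := mk yl yr yL yR
    refine ⟨xl ⊕ yl, xr ⊕ yr, Sum.rec ?_ ?_, Sum.rec ?_ ?_⟩
    · exact fun i => IHxl i y
    · exact IHyl
    · exact fun i => IHxr i y
    · exact IHyr⟩

end PGame

end SetTheory

open SetTheory

namespace Misere

/-- `F` is a follower of `G`: reachable from `G` by a (possibly empty) sequence of moves. -/
def Follower (F G : PGame) : Prop := Relation.ReflTransGen PGame.IsOption F G

def IsLeftEnd (G : PGame) : Prop := IsEmpty G.LeftMoves
def IsRightEnd (G : PGame) : Prop := IsEmpty G.RightMoves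

/-- A dead left end: every follower (including itself) is a left end. -/
def DeadLeftEnd (G : PGame) : Prop := ∀ F, Follower F G → IsLeftEnd F
def DeadRightEnd (G : PGame) : Prop := ∀ F, Follower F G → IsRightEnd F
def DeadEnd (G : PGame) : Prop := DeadLeftEnd G ∨ DeadRightEnd G

/-- A game is dead-ending if every end follower is a dead end. -/
def DeadEnding (G : PGame) : Prop :=
  ∀ F, Follower F G → (IsLeftEnd F → DeadLeftEnd F) ∧ (IsRightEnd F → DeadRightEnd F)

/-- The universe of dead-ending games. -/
def E : Set PGame := {G | DeadEnding G}

/-- `(misereWins G).1` : Left, moving first, wins `G` under misère play;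
    `(misereWins G).2` : Right, moving first, wins `G` under misère play. -/
def misereWins : PGame → Prop × Prop
  | PGame.mk l r L R =>
      (IsEmpty l ∨ ∃ i, ¬ (misereWins (L i)).2,
       IsEmpty r ∨ ∃ j, ¬ (misereWins (R j)).1)

def LeftWinsGF (G : PGame) : Prop := (misereWins G).1
def RightWinsGF (G : PGame) : Prop := (misereWins G).2

inductive MOutcome : Type
  | L | N | P | R
deriving DecidableEq

/-- Partial order on misère outcomes: `R` minimal, `L` maximal, `N` and `P` incomparable. -/
def MOutcome.le : MOutcome → MOutcome → Prop
  | .R, _ => True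
  | _, .L => True
  | a, b => a = b

instance : LE MOutcome := ⟨MOutcome.le⟩

/-- The misère outcome of a game. -/
noncomputable def outcome (G : PGame) : MOutcome := by
  classical
  exact if LeftWinsGF G then (if RightWinsGF G then .N else .L)
        else (if RightWinsGF G then .R else .P)

/-- `G ≡ H (mod U)`. -/
def equivMod (U : Set PGame) (G H : PGame) : Prop :=
  ∀ X ∈ U, outcome (G + X) = outcome (H + X)

/-- `G ≧ H (mod U)`. -/
def geMod (U : Set PGame) (G H : PGame) : Prop :=
  ∀ X ∈ U, outcome (H + X) ≤ outcome (G + X)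

/-- `LeftChain G n`: there is a sequence of `n` consecutive Left moves from `G`
ending at the zero position. -/
inductive LeftChain : PGame → ℕ → Prop
  | zero (G : PGame) : IsLeftEnd G → IsRightEnd G → LeftChain G 0
  | succ (G : PGame) (i : G.LeftMoves) (n : ℕ) :
      LeftChain (G.moveLeft i) n → LeftChain G (n + 1)

inductive RightChain : PGame → ℕ → Prop
  | zero (G : PGame) : IsLeftEnd G → IsRightEnd G → RightChain G 0
  | succ (G : PGame) (j : G.RightMoves) (n : ℕ) :
      RightChain (G.moveRight j) n → RightChain G (n + 1)

/-- Left-length: minimum number of consecutive Left moves needed to reach zero. -/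
noncomputable def leftLength (G : PGame) : ℕ := sInf {n | LeftChain G n}

/-- Right-length: minimum number of consecutive Right moves needed to reach zero. -/
noncomputable def rightLength (G : PGame) : ℕ := sInf {n | RightChain G n}

/-- Normal-play canonical form of a nonnegative integer. -/
def natGame : ℕ → PGame
  | 0 => 0
  | n + 1 => PGame.mk PUnit PEmpty (fun _ => natGame n) PEmpty.elim

/-- Normal-play canonical form of an integer (negatives are conjugates). -/
def intGame (n : ℤ) : PGame :=
  if 0 ≤ n then natGame n.toNat else -natGame (-n).toNat

/-- Normal-play canonical form of the dyadic rational `m / 2 ^ j`. -/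
def dyadicGame : ℤ → ℕ → PGame
  | m, 0 => intGame m
  | m, j + 1 =>
      if m % 2 = 0 then dyadicGame (m / 2) j
      else PGame.mk PUnit PUnit (fun _ => dyadicGame ((m - 1) / 2) j)
            (fun _ => dyadicGame ((m + 1) / 2) j)

/-- The closure of dead ends: finite disjunctive sums of dead ends. -/
def DeadEndClosure : Set PGame :=
  {G | ∃ l : List PGame, (∀ x ∈ l, DeadEnd x) ∧ G = l.sum}

end Misere

/-!
In `k + conj k + X` the summand `k + conj k` is a pair of counters: Left's only moves count her
`k` down, Right's count his `k` down. For dead-ending `X`, a player wins `X` exactly when they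
win `k + conj k + X`: a move in `X` is matched by induction on `X`, a counter move by the
opponent's counter move. The one new situation is a player who has no move left in `X`. As `X`
is dead-ending, `X` is then a dead end for that player, who owns no more counter moves than the
opponent; moving first, they run out of moves first, which wins under misère play.
-/

namespace SetTheory.PGame

theorem neg_neg : ∀ x : PGame, - -x = x
  | mk l r L R => by
    show mk _ _ _ _ = mk _ _ _ _
    congr 1 <;> funext i <;> exact neg_neg _

theorem isEmpty_leftMoves_add (x y : PGame) :
    IsEmpty (x + y).LeftMoves ↔ IsEmpty x.LeftMoves ∧ IsEmpty y.LeftMoves := by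
  cases x; cases y; exact isEmpty_sum

theorem isEmpty_rightMoves_add (x y : PGame) :
    IsEmpty (x + y).RightMoves ↔ IsEmpty x.RightMoves ∧ IsEmpty y.RightMoves := by
  cases x; cases y; exact isEmpty_sum

theorem exists_leftMoves_add (x y : PGame) (p : PGame → Prop) :
    (∃ k, p ((x + y).moveLeft k)) ↔
      (∃ i, p (x.moveLeft i + y)) ∨ ∃ j, p (x + y.moveLeft j) := by
  cases x; cases y; exact Sum.exists

theorem exists_rightMoves_add (x y : PGame) (p : PGame → Prop) :
    (∃ k, p ((x + y).moveRight k)) ↔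
      (∃ i, p (x.moveRight i + y)) ∨ ∃ j, p (x + y.moveRight j) := by
  cases x; cases y; exact Sum.exists

end SetTheory.PGame

namespace Misere

theorem leftWins_iff (G : PGame) :
    LeftWinsGF G ↔ IsLeftEnd G ∨ ∃ i, ¬RightWinsGF (G.moveLeft i) := by
  cases G; exact Iff.rfl

theorem rightWins_iff (G : PGame) :
    RightWinsGF G ↔ IsRightEnd G ∨ ∃ j, ¬LeftWinsGF (G.moveRight j) := by
  cases G; exact Iff.rfl

theorem leftWins_add_iff (x y : PGame) :
    LeftWinsGF (x + y) ↔ IsLeftEnd x ∧ IsLeftEnd y ∨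
      (∃ i, ¬RightWinsGF (x.moveLeft i + y)) ∨ ∃ j, ¬RightWinsGF (x + y.moveLeft j) := by
  rw [leftWins_iff]
  exact or_congr (PGame.isEmpty_leftMoves_add x y)
    (PGame.exists_leftMoves_add x y fun g => ¬RightWinsGF g)

theorem rightWins_add_iff (x y : PGame) :
    RightWinsGF (x + y) ↔ IsRightEnd x ∧ IsRightEnd y ∨
      (∃ i, ¬LeftWinsGF (x.moveRight i + y)) ∨ ∃ j, ¬LeftWinsGF (x + y.moveRight j) := by
  rw [rightWins_iff]
  exact or_congr (PGame.isEmpty_rightMoves_add x y)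
    (PGame.exists_rightMoves_add x y fun g => ¬LeftWinsGF g)

theorem leftWins_congr {G H : PGame} (h : misereWins G = misereWins H) :
    LeftWinsGF G ↔ LeftWinsGF H :=
  iff_of_eq (congrArg Prod.fst h)

theorem rightWins_congr {G H : PGame} (h : misereWins G = misereWins H) :
    RightWinsGF G ↔ RightWinsGF H :=
  iff_of_eq (congrArg Prod.snd h)

theorem outcome_congr {G H : PGame} (h : misereWins G = misereWins H) : outcome G = outcome H := by
  unfold outcome
  rw [propext (leftWins_congr h), propext (rightWins_congr h)]

theorem isLeftEnd_zero : IsLeftEnd 0 := inferInstanceAs (IsEmpty PEmpty)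

theorem isRightEnd_zero : IsRightEnd 0 := inferInstanceAs (IsEmpty PEmpty)

theorem misereWins_add_of_isLeftEnd_of_isRightEnd {Z : PGame} (hl : IsLeftEnd Z)
    (hr : IsRightEnd Z) (X : PGame) : misereWins (Z + X) = misereWins X := by
  induction X with
  | mk _ _ _ _ ihL ihR =>
    refine Prod.ext (propext ?_) (propext ?_)
    · change LeftWinsGF _ ↔ LeftWinsGF _
      rw [leftWins_add_iff, leftWins_iff]
      simp only [hl.exists_iff, iff_true_intro hl, true_and, false_or]
      exact or_congr_right (exists_congr fun i => (rightWins_congr (ihL i)).not)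
    · change RightWinsGF _ ↔ RightWinsGF _
      rw [rightWins_add_iff, rightWins_iff]
      simp only [hr.exists_iff, iff_true_intro hr, true_and, false_or]
      exact or_congr_right (exists_congr fun j => (leftWins_congr (ihR j)).not)

theorem follower_moveLeft (X : PGame) (i : X.LeftMoves) : Follower (X.moveLeft i) X :=
  .single (.moveLeft i)

theorem follower_moveRight (X : PGame) (j : X.RightMoves) : Follower (X.moveRight j) X :=
  .single (.moveRight j)

theorem DeadLeftEnd.isLeftEnd {X : PGame} (h : DeadLeftEnd X) : IsLeftEnd X := h X .refl

theorem DeadRightEnd.isRightEnd {X : PGame} (h : DeadRightEnd X) : IsRightEnd X := h X .refl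

theorem DeadLeftEnd.moveRight {X : PGame} (h : DeadLeftEnd X) (j : X.RightMoves) :
    DeadLeftEnd (X.moveRight j) :=
  fun F hF => h F (hF.trans (follower_moveRight X j))

theorem DeadRightEnd.moveLeft {X : PGame} (h : DeadRightEnd X) (i : X.LeftMoves) :
    DeadRightEnd (X.moveLeft i) :=
  fun F hF => h F (hF.trans (follower_moveLeft X i))

theorem DeadEnding.moveLeft {X : PGame} (h : DeadEnding X) (i : X.LeftMoves) :
    DeadEnding (X.moveLeft i) :=
  fun F hF => h F (hF.trans (follower_moveLeft X i))

theorem DeadEnding.moveRight {X : PGame} (h : DeadEnding X) (j : X.RightMoves) :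
    DeadEnding (X.moveRight j) :=
  fun F hF => h F (hF.trans (follower_moveRight X j))

theorem DeadEnding.deadLeftEnd {X : PGame} (h : DeadEnding X) (hl : IsLeftEnd X) :
    DeadLeftEnd X :=
  (h X .refl).1 hl

theorem DeadEnding.deadRightEnd {X : PGame} (h : DeadEnding X) (hr : IsRightEnd X) :
    DeadRightEnd X :=
  (h X .refl).2 hr

/-- `G a b` plays like `a + conj b`: Left can only count `a` down by one, Right can only
count `b` down by one. -/
structure IsCountdown (G : ℕ → ℕ → PGame) : Prop where
  isLeftEnd_zero (b : ℕ) : IsLeftEnd (G 0 b)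
  isRightEnd_zero (a : ℕ) : IsRightEnd (G a 0)
  exists_moveLeft_succ (a b : ℕ) (p : PGame → Prop) :
    (∃ i, p ((G (a + 1) b).moveLeft i)) ↔ p (G a b)
  exists_moveRight_succ (a b : ℕ) (p : PGame → Prop) :
    (∃ j, p ((G a (b + 1)).moveRight j)) ↔ p (G a b)

namespace IsCountdown

variable {G : ℕ → ℕ → PGame}

theorem not_isLeftEnd_succ (hG : IsCountdown G) (a b : ℕ) : ¬IsLeftEnd (G (a + 1) b) :=
  fun h => h.false ((hG.exists_moveLeft_succ a b fun _ => True).2 trivial).choose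

theorem not_isRightEnd_succ (hG : IsCountdown G) (a b : ℕ) : ¬IsRightEnd (G a (b + 1)) :=
  fun h => h.false ((hG.exists_moveRight_succ a b fun _ => True).2 trivial).choose

theorem leftWins_zero_add_iff (hG : IsCountdown G) (b : ℕ) (X : PGame) :
    LeftWinsGF (G 0 b + X) ↔ IsLeftEnd X ∨ ∃ i, ¬RightWinsGF (G 0 b + X.moveLeft i) := by
  have h := hG.isLeftEnd_zero b
  rw [leftWins_add_iff]
  simp only [h.exists_iff, iff_true_intro h, true_and, false_or]

theorem rightWins_zero_add_iff (hG : IsCountdown G) (a : ℕ) (X : PGame) :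
    RightWinsGF (G a 0 + X) ↔ IsRightEnd X ∨ ∃ j, ¬LeftWinsGF (G a 0 + X.moveRight j) := by
  have h := hG.isRightEnd_zero a
  rw [rightWins_add_iff]
  simp only [h.exists_iff, iff_true_intro h, true_and, false_or]

theorem leftWins_succ_add_iff (hG : IsCountdown G) (a b : ℕ) (X : PGame) :
    LeftWinsGF (G (a + 1) b + X) ↔
      ¬RightWinsGF (G a b + X) ∨ ∃ i, ¬RightWinsGF (G (a + 1) b + X.moveLeft i) := by
  rw [leftWins_add_iff, hG.exists_moveLeft_succ a b fun g => ¬RightWinsGF (g + X)]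
  simp only [hG.not_isLeftEnd_succ, false_and, false_or]

theorem rightWins_succ_add_iff (hG : IsCountdown G) (a b : ℕ) (X : PGame) :
    RightWinsGF (G a (b + 1) + X) ↔
      ¬LeftWinsGF (G a b + X) ∨ ∃ j, ¬LeftWinsGF (G a (b + 1) + X.moveRight j) := by
  rw [rightWins_add_iff, hG.exists_moveRight_succ a b fun g => ¬LeftWinsGF (g + X)]
  simp only [hG.not_isRightEnd_succ, false_and, false_or]

theorem leftWins_of_deadLeftEnd (hG : IsCountdown G) {X : PGame} (hX : DeadLeftEnd X)
    {a b : ℕ} (hab : a ≤ b) : LeftWinsGF (G a b + X) := by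
  induction X generalizing a b with
  | mk _ _ _ _ _ ih =>
    induction a generalizing b with
    | zero => exact (hG.leftWins_zero_add_iff b _).2 (Or.inl hX.isLeftEnd)
    | succ a iha =>
      obtain ⟨b, rfl⟩ : ∃ c, b = c + 1 := ⟨b - 1, by omega⟩
      refine (hG.leftWins_succ_add_iff a (b + 1) _).2 (Or.inl ?_)
      rw [hG.rightWins_succ_add_iff, not_or, not_not, not_exists]
      exact ⟨iha (by omega), fun j => not_not.2 (ih j (hX.moveRight j) (by omega))⟩

theorem rightWins_of_deadRightEnd (hG : IsCountdown G) {X : PGame} (hX : DeadRightEnd X)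
    {a b : ℕ} (hba : b ≤ a) : RightWinsGF (G a b + X) := by
  induction X generalizing a b with
  | mk _ _ _ _ ih _ =>
    induction b generalizing a with
    | zero => exact (hG.rightWins_zero_add_iff a _).2 (Or.inl hX.isRightEnd)
    | succ b ihb =>
      obtain ⟨a, rfl⟩ : ∃ c, a = c + 1 := ⟨a - 1, by omega⟩
      refine (hG.rightWins_succ_add_iff (a + 1) b _).2 (Or.inl ?_)
      rw [hG.leftWins_succ_add_iff, not_or, not_not, not_exists]
      exact ⟨ihb (by omega), fun i => not_not.2 (ih i (hX.moveLeft i) (by omega))⟩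

theorem leftWins_diag_succ_add_iff (hG : IsCountdown G) {X : PGame} (hX : DeadEnding X) {k : ℕ}
    (hk : LeftWinsGF (G k k + X) ↔ LeftWinsGF X)
    (hopt : ∀ i, RightWinsGF (G (k + 1) (k + 1) + X.moveLeft i) ↔ RightWinsGF (X.moveLeft i)) :
    LeftWinsGF (G (k + 1) (k + 1) + X) ↔ LeftWinsGF X := by
  constructor
  · intro h
    rcases (hG.leftWins_succ_add_iff k (k + 1) X).1 h with h | ⟨i, hi⟩
    · exact hk.1 (by_contra fun h' => h ((hG.rightWins_succ_add_iff k k X).2 (Or.inl h')))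
    · exact (leftWins_iff X).2 (Or.inr ⟨i, (hopt i).not.1 hi⟩)
  · intro h
    rcases (leftWins_iff X).1 h with h | ⟨i, hi⟩
    · exact hG.leftWins_of_deadLeftEnd (hX.deadLeftEnd h) le_rfl
    · exact (hG.leftWins_succ_add_iff k (k + 1) X).2 (Or.inr ⟨i, (hopt i).not.2 hi⟩)

theorem rightWins_diag_succ_add_iff (hG : IsCountdown G) {X : PGame} (hX : DeadEnding X) {k : ℕ}
    (hk : RightWinsGF (G k k + X) ↔ RightWinsGF X)
    (hopt : ∀ j, LeftWinsGF (G (k + 1) (k + 1) + X.moveRight j) ↔ LeftWinsGF (X.moveRight j)) :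
    RightWinsGF (G (k + 1) (k + 1) + X) ↔ RightWinsGF X := by
  constructor
  · intro h
    rcases (hG.rightWins_succ_add_iff (k + 1) k X).1 h with h | ⟨j, hj⟩
    · exact hk.1 (by_contra fun h' => h ((hG.leftWins_succ_add_iff k k X).2 (Or.inl h')))
    · exact (rightWins_iff X).2 (Or.inr ⟨j, (hopt j).not.1 hj⟩)
  · intro h
    rcases (rightWins_iff X).1 h with h | ⟨j, hj⟩
    · exact hG.rightWins_of_deadRightEnd (hX.deadRightEnd h) le_rfl
    · exact (hG.rightWins_succ_add_iff (k + 1) k X).2 (Or.inr ⟨j, (hopt j).not.2 hj⟩)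

theorem misereWins_diag_add (hG : IsCountdown G) {X : PGame} (hX : DeadEnding X) (k : ℕ) :
    misereWins (G k k + X) = misereWins X := by
  induction X generalizing k with
  | mk _ _ _ _ ihL ihR =>
    induction k with
    | zero =>
      exact misereWins_add_of_isLeftEnd_of_isRightEnd (hG.isLeftEnd_zero 0) (hG.isRightEnd_zero 0) _
    | succ k ihk =>
      refine Prod.ext (propext ?_) (propext ?_)
      · exact hG.leftWins_diag_succ_add_iff hX (leftWins_congr ihk)
          fun i => rightWins_congr (ihL i (hX.moveLeft i) _)
      · exact hG.rightWins_diag_succ_add_iff hX (rightWins_congr ihk)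
          fun j => leftWins_congr (ihR j (hX.moveRight j) _)

end IsCountdown

theorem isRightEnd_natGame (a : ℕ) : IsRightEnd (natGame a) := by
  cases a <;> exact inferInstanceAs (IsEmpty PEmpty)

theorem isLeftEnd_neg_natGame (b : ℕ) : IsLeftEnd (-natGame b) := by
  cases b <;> exact inferInstanceAs (IsEmpty PEmpty)

theorem isRightEnd_neg_natGame_zero : IsRightEnd (-natGame 0) := inferInstanceAs (IsEmpty PEmpty)

theorem exists_moveLeft_natGame_succ (a : ℕ) (p : PGame → Prop) :
    (∃ i, p ((natGame (a + 1)).moveLeft i)) ↔ p (natGame a) :=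
  ⟨fun ⟨_, h⟩ => h, fun h => ⟨PUnit.unit, h⟩⟩

theorem exists_moveRight_neg_natGame_succ (b : ℕ) (p : PGame → Prop) :
    (∃ j, p ((-natGame (b + 1)).moveRight j)) ↔ p (-natGame b) :=
  ⟨fun ⟨_, h⟩ => h, fun h => ⟨PUnit.unit, h⟩⟩

theorem isCountdown_natGame_add_neg : IsCountdown fun a b => natGame a + -natGame b where
  isLeftEnd_zero b :=
    (PGame.isEmpty_leftMoves_add _ _).2 ⟨isLeftEnd_zero, isLeftEnd_neg_natGame b⟩
  isRightEnd_zero a :=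
    (PGame.isEmpty_rightMoves_add _ _).2 ⟨isRightEnd_natGame a, isRightEnd_neg_natGame_zero⟩
  exists_moveLeft_succ a b p := by
    rw [PGame.exists_leftMoves_add, exists_moveLeft_natGame_succ a fun g => p (g + _),
      (isLeftEnd_neg_natGame b).exists_iff, or_false]
  exists_moveRight_succ a b p := by
    rw [PGame.exists_rightMoves_add, exists_moveRight_neg_natGame_succ b fun g => p (_ + g),
      (isRightEnd_natGame a).exists_iff, false_or]

theorem isCountdown_neg_natGame_add : IsCountdown fun a b => -natGame b + natGame a where
  isLeftEnd_zero b :=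
    (PGame.isEmpty_leftMoves_add _ _).2 ⟨isLeftEnd_neg_natGame b, isLeftEnd_zero⟩
  isRightEnd_zero a :=
    (PGame.isEmpty_rightMoves_add _ _).2 ⟨isRightEnd_neg_natGame_zero, isRightEnd_natGame a⟩
  exists_moveLeft_succ a b p := by
    rw [PGame.exists_leftMoves_add, exists_moveLeft_natGame_succ a fun g => p (_ + g),
      (isLeftEnd_neg_natGame b).exists_iff, false_or]
  exists_moveRight_succ a b p := by
    rw [PGame.exists_rightMoves_add, exists_moveRight_neg_natGame_succ b fun g => p (g + _),
      (isRightEnd_natGame a).exists_iff, or_false]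

end Misere

open Misere SetTheory PGame

/-- every canonical-form integer plus its conjugate is equivalent to 0 mod E. -/
theorem stmt6 (n : ℤ) :
    equivMod E (intGame n + -intGame n) 0 := by
  intro X hX
  rw [outcome_congr (misereWins_add_of_isLeftEnd_of_isRightEnd isLeftEnd_zero isRightEnd_zero X)]
  unfold intGame
  split_ifs
  · exact outcome_congr (isCountdown_natGame_add_neg.misereWins_diag_add hX _)
  · rw [PGame.neg_neg]
    exact outcome_congr (isCountdown_neg_natGame_add.misereWins_diag_add hX _)
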